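/- Let X be a real Banach space, let (A_n) be an approximation scheme in X, and let Y be a normed space that is a linear subspace of X such that the inclusion map Y ↪ X is compact (the unit ball of Y is relatively compact in X). Then Y is not far from (A_n): there is no c > 0 with E(S(Y), A_n) ≥ c for all n, i.e., inf_n E(S(Y), A_n) = 0. Consequently, Y fails Shapiro's Theorem relative to (A_n). -/

import Mathlib

open Metric Filter Pointwise

/-- `(A, K)` is an approximation scheme on `X`: the sets `A n` form a strictly increasing
chain, `A n + A n ⊆ A (K n)` with `K n ≥ n`, each `A n` is closed under scalar
multiplication, and `⋃ n, A n` is dense in `X`. -/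
def IsApproximationScheme {X : Type*} [NormedAddCommGroup X] [NormedSpace ℝ X]
    (A : ℕ → Set X) (K : ℕ → ℕ) : Prop :=
  (∀ n, A n ⊂ A (n + 1)) ∧
  (∀ n, n ≤ K n ∧ A n + A n ⊆ A (K n)) ∧
  (∀ (n : ℕ) (c : ℝ), c • A n ⊆ A n) ∧
  Dense (⋃ n, A n)

/-- Admissible error sequences: nonnegative, nonincreasing, tending to `0`. -/
def NullSeq (ε : ℕ → ℝ) : Prop :=
  (∀ n, 0 ≤ ε n) ∧ Antitone ε ∧ Tendsto ε atTop (nhds 0)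

/-!
Because the `A n` increase to a dense set, `infDist x (A n)` decreases to `0` for every `x` (once
`A n` is nonempty), so by Dini's theorem it does so uniformly on the compact closure `B` of the
image of the unit ball of `Y`; hence `E(B, A n) → 0`. Each `A n` is invariant under all scalings, so
`E(J y, A n) = ‖y‖ E(J (y / ‖y‖), A n) ≤ ‖y‖ E(B, A n)`, and the least antitone majorant of
`n ↦ E(B, A n)` is an admissible error sequence. On the unit sphere this bound tends to `0`, so `Y`
is not far from `(A n)`.
-/

open Set Topology

/-- The paper's `E(B, s) = sup_{b ∈ B} E(b, s)`. -/
noncomputable def approxError {X : Type*} [PseudoMetricSpace X] (B s : Set X) : ℝ :=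
  sSup ((infDist · s) '' B)

section MetricSpace

variable {X : Type*} [PseudoMetricSpace X] {B s : Set X}

theorem approxError_nonneg : 0 ≤ approxError B s :=
  Real.sSup_nonneg <| forall_mem_image.2 fun _ _ => infDist_nonneg

theorem infDist_le_approxError (hB : IsCompact B) {x : X} (hx : x ∈ B) :
    infDist x s ≤ approxError B s :=
  le_csSup (hB.image (continuous_infDist_pt s)).bddAbove (mem_image_of_mem _ hx)

theorem tendsto_approxError_of_tendstoUniformlyOn {ι : Type*} {l : Filter ι} {A : ι → Set X}
    (h : TendstoUniformlyOn (fun n x => infDist x (A n)) 0 l B) :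
    Tendsto (fun n => approxError B (A n)) l (𝓝 0) := by
  refine tendsto_order.2 ⟨fun a ha => Eventually.of_forall fun _ => ha.trans_le approxError_nonneg,
    fun a ha => ?_⟩
  obtain ⟨b, hb0, hba⟩ := exists_between ha
  filter_upwards [Metric.tendstoUniformlyOn_iff.1 h b hb0] with n hn
  refine (Real.sSup_le (forall_mem_image.2 fun x hx => ?_) hb0.le).trans_lt hba
  simpa [abs_of_nonneg infDist_nonneg] using (hn x hx).le

theorem tendsto_infDist_of_dense_iUnion {A : ℕ → Set X} (hA : Monotone A)
    (hd : Dense (⋃ n, A n)) (x : X) : Tendsto (fun n => infDist x (A n)) atTop (𝓝 0) := by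
  refine Metric.tendsto_atTop.2 fun δ hδ => ?_
  obtain ⟨a, ha, hxa⟩ := hd.exists_dist_lt x hδ
  obtain ⟨N, haN⟩ := mem_iUnion.1 ha
  refine ⟨N, fun n hn => ?_⟩
  rw [Real.dist_eq, sub_zero, abs_of_nonneg infDist_nonneg]
  exact (infDist_le_dist_of_mem (hA hn haN)).trans_lt hxa

theorem tendstoUniformlyOn_infDist_of_dense_iUnion {A : ℕ → Set X} (hA : Monotone A)
    (hd : Dense (⋃ n, A n)) (hB : IsCompact B) :
    TendstoUniformlyOn (fun n x => infDist x (A n)) 0 atTop B := by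
  rcases B.eq_empty_or_nonempty with rfl | ⟨x₀, -⟩
  · exact tendstoUniformlyOn_empty
  have : Nonempty X := ⟨x₀⟩
  obtain ⟨N, hN⟩ : ∃ N, (A N).Nonempty := nonempty_iUnion.1 hd.nonempty
  -- Dini's theorem needs monotonicity in `n`, which fails while `A n` is empty (`infDist x ∅ = 0`).
  have hshift : TendstoUniformlyOn (fun n x => infDist x (A (max n N))) 0 atTop B :=
    Antitone.tendstoUniformlyOn_of_forall_tendsto hB
      (fun _ => (continuous_infDist_pt _).continuousOn)
      (fun _ _ m n hmn => infDist_le_infDist_of_subset (hA (max_le_max_right N hmn))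
        (hN.mono (hA (le_max_right m N))))
      continuousOn_const
      (fun x _ => (tendsto_infDist_of_dense_iUnion hA hd x).comp
        (tendsto_atTop_mono (le_max_left · N) tendsto_id))
  refine hshift.congr ?_
  filter_upwards [eventually_ge_atTop N] with n hn x _
  rw [max_eq_left hn]

end MetricSpace

theorem exists_nullSeq_ge {u : ℕ → ℝ} (hu0 : ∀ n, 0 ≤ u n) (hu : Tendsto u atTop (𝓝 0)) :
    ∃ ε, NullSeq ε ∧ ∀ n, u n ≤ ε n := by
  have hbdd : ∀ n, BddAbove (u '' Ici n) := fun n =>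
    hu.bddAbove_range.mono (image_subset_range _ _)
  have hle : ∀ n, u n ≤ sSup (u '' Ici n) := fun n =>
    le_csSup (hbdd n) (mem_image_of_mem u self_mem_Ici)
  refine ⟨fun n => sSup (u '' Ici n), ⟨fun n => (hu0 n).trans (hle n), ?_, ?_⟩, hle⟩
  · exact fun m n hmn => csSup_le_csSup (hbdd m) (nonempty_Ici.image u)
      (image_mono (Ici_subset_Ici.2 hmn))
  · refine tendsto_order.2 ⟨fun a ha => Eventually.of_forall fun n =>
      ha.trans_le ((hu0 n).trans (hle n)), fun a ha => ?_⟩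
    obtain ⟨b, hb0, hba⟩ := exists_between ha
    obtain ⟨N, hN⟩ := eventually_atTop.1 (hu.eventually (eventually_le_nhds hb0))
    filter_upwards [eventually_ge_atTop N] with n hn
    exact (csSup_le (nonempty_Ici.image u)
      (forall_mem_image.2 fun m hm => hN m (hn.trans hm))).trans_lt hba

section NormedSpace

variable {X : Type*} [NormedAddCommGroup X] [NormedSpace ℝ X] {s : Set X}

theorem infDist_smul_of_forall_smul_subset (hs : ∀ c : ℝ, c • s ⊆ s) (c : ℝ) (x : X) :
    infDist (c • x) s = |c| * infDist x s := by
  rcases eq_or_ne c 0 with rfl | hc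
  · rcases s.eq_empty_or_nonempty with rfl | hne
    · simp
    have h0 : (0 : X) ∈ s := hs 0 (by simp [zero_smul_set hne])
    simp [infDist_zero_of_mem h0]
  have hcs : c • s = s := (hs c).antisymm fun a ha =>
    ⟨c⁻¹ • a, hs c⁻¹ (smul_mem_smul_set ha), smul_inv_smul₀ hc a⟩
  rw [← Real.norm_eq_abs, ← infDist_smul₀ hc, hcs]

theorem infDist_le_norm_mul_approxError {Y : Type*} [NormedAddCommGroup Y] [NormedSpace ℝ Y]
    (J : Y →ₗ[ℝ] X) {B : Set X} (hs : ∀ c : ℝ, c • s ⊆ s) (hB : IsCompact B)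
    (hJB : MapsTo J (closedBall 0 1) B) (y : Y) :
    infDist (J y) s ≤ ‖y‖ * approxError B s := by
  rcases eq_or_ne y 0 with rfl | hy
  · simpa using (infDist_smul_of_forall_smul_subset hs 0 (0 : X)).le
  have hny : ‖y‖ ≠ 0 := norm_ne_zero_iff.2 hy
  have hunit : ‖y‖⁻¹ • y ∈ closedBall (0 : Y) 1 := by
    rw [mem_closedBall_zero_iff, norm_smul, norm_inv, norm_norm, inv_mul_cancel₀ hny]
  calc infDist (J y) s = infDist (‖y‖ • J (‖y‖⁻¹ • y)) s := by
        rw [map_smul, smul_inv_smul₀ hny]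
    _ = ‖y‖ * infDist (J (‖y‖⁻¹ • y)) s := by
        rw [infDist_smul_of_forall_smul_subset hs, abs_norm]
    _ ≤ ‖y‖ * approxError B s :=
        mul_le_mul_of_nonneg_left (infDist_le_approxError hB (hJB hunit)) (norm_nonneg y)

end NormedSpace

theorem IsApproximationScheme.monotone {X : Type*} [NormedAddCommGroup X] [NormedSpace ℝ X]
    {A : ℕ → Set X} {K : ℕ → ℕ} (hA : IsApproximationScheme A K) : Monotone A :=
  monotone_nat_of_le_succ fun n => (hA.1 n).subset

theorem compact_embedding_not_far
    {X : Type*} [NormedAddCommGroup X] [NormedSpace ℝ X]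
    {Y : Type*} [NormedAddCommGroup Y] [NormedSpace ℝ Y]
    (A : ℕ → Set X) (K : ℕ → ℕ) (hA : IsApproximationScheme A K)
    (J : Y →L[ℝ] X)
    (hcpt : IsCompact (closure (J '' Metric.closedBall 0 1))) :
    (¬ ∃ c > (0 : ℝ), ∀ n : ℕ, ∀ δ > (0 : ℝ),
        ∃ y : Y, ‖y‖ = 1 ∧ infDist (J y) (A n) > c - δ) ∧
    (∃ ε : ℕ → ℝ, NullSeq ε ∧ ∃ C : Y → ℝ, (∀ y : Y, 0 ≤ C y) ∧
        ∀ (y : Y) (n : ℕ), infDist (J y) (A n) ≤ C y * ε n) := by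
  obtain ⟨ε, hε, hεE⟩ := exists_nullSeq_ge (fun _ => approxError_nonneg)
    (tendsto_approxError_of_tendstoUniformlyOn
      (tendstoUniformlyOn_infDist_of_dense_iUnion hA.monotone hA.2.2.2 hcpt))
  have hbound (y : Y) (n : ℕ) : infDist (J y) (A n) ≤ ‖y‖ * ε n :=
    (infDist_le_norm_mul_approxError J.toLinearMap (hA.2.2.1 n) hcpt
      (fun _ hy => subset_closure (mem_image_of_mem J hy)) y).trans
      (mul_le_mul_of_nonneg_left (hεE n) (norm_nonneg y))
  refine ⟨?_, ε, hε, (‖·‖), norm_nonneg, hbound⟩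
  rintro ⟨c, hc, hfar⟩
  obtain ⟨n, hn⟩ := (hε.2.2.eventually (gt_mem_nhds (half_pos hc))).exists
  obtain ⟨y, hy1, hy⟩ := hfar n (c / 2) (half_pos hc)
  have hyn : infDist (J y) (A n) ≤ ε n := by simpa [hy1] using hbound y n
  linarith
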